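/- arXiv:1910.09914 — 11 statements merged into one kernel-verified Lean document; each statement's English description precedes it below -/
import Mathlib

section
/- Let r be a non-empty word over alphabet A and T(r) = {w ∈ A* : rw ∈ A*r}. Then T(r) is left unitary: if z ∈ T(r) and zw ∈ T(r), then w ∈ T(r). -/
namespace FreeMonoid

variable {A : Type*}

theorem exists_eq_mul_of_mul_eq_mul {a b u v : FreeMonoid A} (h : a * u = b * v)
    (hvu : v.length ≤ u.length) : ∃ t, u = t * v := by
  have hv : v.toList <:+ (a * u).toList := h ▸ List.suffix_append b.toList v.toList
  obtain ⟨t, ht⟩ := List.suffix_of_suffix_length_le hv (List.suffix_append _ _) hvu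
  exact ⟨ofList t, toList.injective ht.symm⟩

end FreeMonoid

theorem Tr_left_unitary_general {A : Type*} (r : FreeMonoid A)
    (z w : FreeMonoid A)
    (hz : ∃ y, r * z = y * r) (hzw : ∃ y, r * (z * w) = y * r) :
    ∃ y, r * w = y * r := by
  obtain ⟨y, hy⟩ := hz
  obtain ⟨y', hy'⟩ := hzw
  -- `r·w` and `r` are both suffixes of `r·z·w = y·r·w = y'·r`.
  have hsuffix : y * (r * w) = y' * r := by rw [← mul_assoc, ← hy, mul_assoc, hy']
  exact FreeMonoid.exists_eq_mul_of_mul_eq_mul hsuffix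
    (by rw [FreeMonoid.length_mul]; omega)

/-- `T(r) = {w : rw ∈ A*r}` is left unitary:
if `z ∈ T(r)` and `z·w ∈ T(r)`, then `w ∈ T(r)`. -/
theorem Tr_left_unitary {A : Type*} (r : FreeMonoid A) (hr : r ≠ 1)
    (z w : FreeMonoid A)
    (hz : ∃ y, r * z = y * r) (hzw : ∃ y, r * (z * w) = y * r) :
    ∃ y, r * w = y * r :=
  Tr_left_unitary_general r z w hz hzw
end

section
/- Let N be a left unitary submonoid of the free monoid A*, and let P = (N \ {ε}) \ (N \ {ε})² be its set of irreducible elements. Then P is a prefix code: no element of P is a proper prefix of another element of P. -/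
/-- The set of irreducible elements of a submonoid `N` of a free monoid:
non-identity elements that are not a product of two non-identity elements of `N`. -/
def irreducibles {A : Type*} (N : Submonoid (FreeMonoid A)) : Set (FreeMonoid A) :=
  {p | p ∈ N ∧ p ≠ 1 ∧ ¬ ∃ a b : FreeMonoid A,
        a ∈ N ∧ b ∈ N ∧ a ≠ 1 ∧ b ≠ 1 ∧ p = a * b}

theorem eq_one_of_mul_mem_irreducibles {A : Type*} {N : Submonoid (FreeMonoid A)}
    {p t : FreeMonoid A} (hp : p ∈ N) (ht : t ∈ N) (hp1 : p ≠ 1)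
    (hpt : p * t ∈ irreducibles N) : t = 1 := by
  by_contra ht1
  exact hpt.2.2 ⟨p, t, hp, ht, hp1, ht1, rfl⟩

/-- If `N` is a left unitary submonoid of the free monoid `A*`, then its set
`P` of irreducible elements is a prefix code: no element of `P` is a proper prefix of
another element of `P` (equivalently, if `p, q ∈ P` and `p` is a prefix of `q`, then `p = q`). -/
theorem irreducibles_prefix_code {A : Type*} (N : Submonoid (FreeMonoid A))
    (hLU : ∀ z w : FreeMonoid A, z ∈ N → z * w ∈ N → w ∈ N) :
    ∀ p ∈ irreducibles N, ∀ q ∈ irreducibles N, (∃ t, q = p * t) → p = q := by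
  rintro p ⟨hpN, hp1, -⟩ _ hq ⟨t, rfl⟩
  have htN : t ∈ N := hLU p t hpN hq.1
  rw [eq_one_of_mul_mem_irreducibles hpN htN hp1 hq, mul_one]
end

section
/- Let N be a left unitary submonoid of the free monoid A* and P its set of irreducible elements. Then every non-empty element of N factors uniquely as a product of elements of P; i.e., N is a free monoid with basis P. -/
def Submonoid.IsLeftUnitary {M : Type*} [Monoid M] (N : Submonoid M) : Prop :=
  ∀ z w : M, z ∈ N → z * w ∈ N → w ∈ N

theorem FreeMonoid.exists_eq_mul_or_exists_eq_mul_of_mul_eq_mul {A : Type*}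
    {p q u v : FreeMonoid A} (h : p * u = q * v) : (∃ r, q = p * r) ∨ ∃ r, p = q * r := by
  rcases List.append_eq_append_iff.mp (congrArg FreeMonoid.toList h) with ⟨r, hq, -⟩ | ⟨r, hp, -⟩
  · exact .inl ⟨ofList r, toList.injective hq⟩
  · exact .inr ⟨ofList r, toList.injective hp⟩

theorem List.eq_of_prod_eq_of_prefix_code {M : Type*} [LeftCancelMonoid M] [Subsingleton Mˣ]
    {P : Set M} (hP₁ : 1 ∉ P) (hP : ∀ p ∈ P, ∀ q ∈ P, ∀ u v : M, p * u = q * v → p = q) :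
    ∀ {l₁ l₂ : List M}, (∀ p ∈ l₁, p ∈ P) → (∀ q ∈ l₂, q ∈ P) → l₁.prod = l₂.prod → l₁ = l₂
  | [], [], _, _, _ => rfl
  | [], q :: _, _, h₂, h =>
    absurd (h₂ q mem_cons_self) (LeftCancelMonoid.eq_one_of_mul_right h.symm ▸ hP₁)
  | p :: _, [], h₁, _, h =>
    absurd (h₁ p mem_cons_self) (LeftCancelMonoid.eq_one_of_mul_right h ▸ hP₁)
  | p :: t₁, q :: t₂, h₁, h₂, h => by
    rw [prod_cons, prod_cons] at h
    obtain rfl : p = q := hP p (h₁ p mem_cons_self) q (h₂ q mem_cons_self) _ _ h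
    rw [eq_of_prod_eq_of_prefix_code hP₁ hP (fun x hx => h₁ x (mem_cons_of_mem p hx))
      (fun x hx => h₂ x (mem_cons_of_mem p hx)) (mul_left_cancel h)]

section irreducibles

variable {A : Type*} {N : Submonoid (FreeMonoid A)}

theorem one_notMem_irreducibles : 1 ∉ irreducibles N := fun h => h.2.1 rfl

theorem exists_eq_mul_of_notMem_irreducibles {n : FreeMonoid A} (hn : n ∈ N) (hne : n ≠ 1)
    (hirr : n ∉ irreducibles N) : ∃ a b, a ∈ N ∧ b ∈ N ∧ a ≠ 1 ∧ b ≠ 1 ∧ n = a * b := by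
  by_contra h
  exact hirr ⟨hn, hne, h⟩

theorem exists_forall_mem_irreducibles_prod_eq {n : FreeMonoid A} (hn : n ∈ N) (hne : n ≠ 1) :
    ∃ l : List (FreeMonoid A), (∀ p ∈ l, p ∈ irreducibles N) ∧ l.prod = n := by
  induction hlen : n.length using Nat.strong_induction_on generalizing n with
  | _ k ih =>
    by_cases hirr : n ∈ irreducibles N
    · exact ⟨[n], by simpa using hirr, List.prod_singleton⟩
    obtain ⟨a, b, ha, hb, ha₁, hb₁, rfl⟩ := exists_eq_mul_of_notMem_irreducibles hn hne hirr
    have ha₀ : a.length ≠ 0 := mt FreeMonoid.length_eq_zero.mp ha₁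
    have hb₀ : b.length ≠ 0 := mt FreeMonoid.length_eq_zero.mp hb₁
    rw [FreeMonoid.length_mul] at hlen
    obtain ⟨l₁, hl₁, rfl⟩ := ih _ (by omega) ha ha₁ rfl
    obtain ⟨l₂, hl₂, rfl⟩ := ih _ (by omega) hb hb₁ rfl
    refine ⟨l₁ ++ l₂, fun p hp => ?_, List.prod_append⟩
    exact (List.mem_append.mp hp).elim (hl₁ p) (hl₂ p)

theorem Submonoid.IsLeftUnitary.eq_of_mem_irreducibles_of_eq_mul (hN : N.IsLeftUnitary)
    {p q r : FreeMonoid A} (hp : p ∈ irreducibles N) (hq : q ∈ irreducibles N)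
    (h : q = p * r) : p = q := by
  by_cases hr : r = 1
  · rw [h, hr, mul_one]
  · exact (hq.2.2 ⟨p, r, hp.1, hN p r hp.1 (h ▸ hq.1), hp.2.1, hr, h⟩).elim

theorem Submonoid.IsLeftUnitary.eq_of_mem_irreducibles_of_mul_eq_mul (hN : N.IsLeftUnitary)
    {p q : FreeMonoid A} (hp : p ∈ irreducibles N) (hq : q ∈ irreducibles N)
    {u v : FreeMonoid A} (h : p * u = q * v) : p = q := by
  rcases FreeMonoid.exists_eq_mul_or_exists_eq_mul_of_mul_eq_mul h with ⟨r, hr⟩ | ⟨r, hr⟩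
  · exact hN.eq_of_mem_irreducibles_of_eq_mul hp hq hr
  · exact (hN.eq_of_mem_irreducibles_of_eq_mul hq hp hr).symm

end irreducibles

/-- If `N` is a left unitary submonoid of the free monoid `A*` with set of
irreducibles `P`, then every non-empty element of `N` factors uniquely as a product of
elements of `P`; i.e. `N` is a free monoid with basis `P`. -/
theorem left_unitary_free_on_irreducibles {A : Type*} (N : Submonoid (FreeMonoid A))
    (hLU : ∀ z w : FreeMonoid A, z ∈ N → z * w ∈ N → w ∈ N) :
    ∀ n ∈ N, n ≠ 1 →
      ∃! l : List (FreeMonoid A), (∀ p ∈ l, p ∈ irreducibles N) ∧ l.prod = n := by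
  intro n hn hne
  have hN : N.IsLeftUnitary := hLU
  obtain ⟨l, hl, rfl⟩ := exists_forall_mem_irreducibles_prod_eq hn hne
  refine ⟨l, ⟨hl, rfl⟩, fun l' ⟨hl', hprod⟩ => ?_⟩
  exact List.eq_of_prod_eq_of_prefix_code one_notMem_irreducibles
    (fun p hp q hq _ _ => hN.eq_of_mem_irreducibles_of_mul_eq_mul hp hq) hl' hl hprod
end

section
/- Let r be a self-overlap-free (SOF) non-empty word over A (no proper non-empty prefix of r is also a suffix of r). Then T(r) = A*r ∪ {ε}, where T(r) = {w ∈ A* : rw ∈ A*r}. -/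
/-! Comparing the two factorisations of `r * w = y * r`: either `w` ends with `r`, or the
overlap `e` with `r = y * e = e * w` is a prefix and a suffix of `r`; by self-overlap-freeness
`e` is empty (so `w = r`) or `e = r` (so `w = 1`). -/

/-- A word `r` is self-overlap-free (SOF) if no proper non-empty word is simultaneously
a prefix and a suffix of `r`: any non-empty `p` which is both a prefix and a suffix of
`r` equals `r`. -/
def SOF {A : Type*} (r : FreeMonoid A) : Prop :=
  ∀ p : FreeMonoid A, p ≠ 1 → (∃ t, r = p * t) → (∃ t, r = t * p) → p = r

theorem FreeMonoid.mul_eq_mul_iff {α : Type*} {a b c d : FreeMonoid α} :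
    a * b = c * d ↔ (∃ e, c = a * e ∧ b = e * d) ∨ ∃ e, a = c * e ∧ d = e * b :=
  List.append_eq_append_iff

theorem SOF.eq_mul_or_eq_one_of_mul_eq_mul {A : Type*} {r w y : FreeMonoid A} (hsof : SOF r)
    (h : r * w = y * r) : (∃ x, w = x * r) ∨ w = 1 := by
  obtain ⟨e, -, hw⟩ | ⟨e, hr_suffix, hr_prefix⟩ := FreeMonoid.mul_eq_mul_iff.mp h
  · exact .inl ⟨e, hw⟩
  by_cases he : e = 1
  · exact .inl ⟨1, by simpa [he] using hr_prefix.symm⟩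
  · have he_eq : e = r := hsof e he ⟨w, hr_prefix⟩ ⟨y, hr_suffix⟩
    rw [he_eq, left_eq_mul] at hr_prefix
    exact .inr hr_prefix

theorem Tr_of_SOF_general {A : Type*} (r : FreeMonoid A) (hsof : SOF r) :
    {w : FreeMonoid A | ∃ y, r * w = y * r} =
      {w : FreeMonoid A | ∃ y, w = y * r} ∪ {(1 : FreeMonoid A)} := by
  ext w
  constructor
  · rintro ⟨y, h⟩
    exact hsof.eq_mul_or_eq_one_of_mul_eq_mul h
  · rintro (⟨y, rfl⟩ | rfl)
    · exact ⟨r * y, (mul_assoc r y r).symm⟩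
    · exact ⟨1, by rw [mul_one, one_mul]⟩

/-- If `r` is a non-empty self-overlap-free word, then
`T(r) = A*r ∪ {ε}`, where `T(r) = {w : rw ∈ A*r}`. -/
theorem Tr_of_SOF {A : Type*} (r : FreeMonoid A) (hr : r ≠ 1) (hsof : SOF r) :
    {w : FreeMonoid A | ∃ y, r * w = y * r} =
      {w : FreeMonoid A | ∃ y, w = y * r} ∪ {(1 : FreeMonoid A)} :=
  Tr_of_SOF_general r hsof
end

section
/- If a one-relator relation u = v (with u,v words over A) is compressible, then among the non-empty words compressing it (i.e., words r that are a prefix and a suffix of both u and v) there is a unique shortest one, and this shortest word x is self-overlap-free; moreover x is the only SOF word compressing the relation. -/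
/-- A non-empty word `r` compresses the relation `u = v` if `r` is both a prefix
and a suffix of both `u` and `v`. -/
def Compresses {A : Type*} (u v r : FreeMonoid A) : Prop :=
  r ≠ 1 ∧ (∃ t, u = r * t) ∧ (∃ t, u = t * r) ∧ (∃ t, v = r * t) ∧ (∃ t, v = t * r)

/-!
Two words compressing `u = v` are both prefixes of `u`, so the shorter one is a prefix of the
longer, and likewise a suffix. Hence a shortest compressing word `x` is a prefix and a suffix of
every compressing word, and every non-empty prefix-and-suffix of `x` compresses the relation
itself, which forces it to be `x` by minimality.
-/

namespace FreeMonoid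

variable {A : Type*} {u r : FreeMonoid A}

theorem exists_eq_mul_right_iff_isPrefix : (∃ t, u = r * t) ↔ r.toList <+: u.toList :=
  ⟨fun ⟨t, ht⟩ ↦ ⟨t.toList, by rw [ht, toList_mul]⟩,
    fun ⟨s, hs⟩ ↦ ⟨ofList s, toList.injective hs.symm⟩⟩

theorem exists_eq_mul_left_iff_isSuffix : (∃ t, u = t * r) ↔ r.toList <:+ u.toList :=
  ⟨fun ⟨t, ht⟩ ↦ ⟨t.toList, by rw [ht, toList_mul]⟩,
    fun ⟨s, hs⟩ ↦ ⟨ofList s, toList.injective hs.symm⟩⟩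

end FreeMonoid

open FreeMonoid

namespace Compresses

variable {A : Type*} {u v r s : FreeMonoid A}

theorem isPrefix_of_length_le (hr : Compresses u v r) (hs : Compresses u v s)
    (hle : r.length ≤ s.length) : r.toList <+: s.toList :=
  List.prefix_of_prefix_length_le (exists_eq_mul_right_iff_isPrefix.mp hr.2.1)
    (exists_eq_mul_right_iff_isPrefix.mp hs.2.1) hle

theorem isSuffix_of_length_le (hr : Compresses u v r) (hs : Compresses u v s)
    (hle : r.length ≤ s.length) : r.toList <:+ s.toList :=
  List.suffix_of_suffix_length_le (exists_eq_mul_left_iff_isSuffix.mp hr.2.2.1)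
    (exists_eq_mul_left_iff_isSuffix.mp hs.2.2.1) hle

theorem eq_of_length_eq (hr : Compresses u v r) (hs : Compresses u v s)
    (hlen : r.length = s.length) : r = s :=
  toList.injective ((hr.isPrefix_of_length_le hs hlen.le).eq_of_length hlen)

theorem of_isPrefix_of_isSuffix (hr : Compresses u v r) (hs1 : s ≠ 1)
    (hpre : s.toList <+: r.toList) (hsuf : s.toList <:+ r.toList) : Compresses u v s := by
  obtain ⟨-, hru, hru', hrv, hrv'⟩ := hr
  simp only [Compresses, exists_eq_mul_right_iff_isPrefix, exists_eq_mul_left_iff_isSuffix] at *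
  exact ⟨hs1, hpre.trans hru, hsuf.trans hru', hpre.trans hrv, hsuf.trans hrv'⟩

end Compresses

/-- If the relation `u = v` is compressible, then among the words
compressing it there is a unique shortest one `x`; this `x` is self-overlap-free,
and it is the only SOF word compressing the relation. -/
theorem shortest_compressing_word {A : Type*} (u v : FreeMonoid A)
    (h : ∃ r, Compresses u v r) :
    ∃ x : FreeMonoid A, Compresses u v x ∧
      (∀ r, Compresses u v r → x.length ≤ r.length) ∧
      (∀ r, Compresses u v r → r.length ≤ x.length → r = x) ∧
      SOF x ∧
      (∀ r, Compresses u v r → SOF r → r = x) := by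
  obtain ⟨x, hx, hxmin⟩ := exists_minimalFor_of_wellFoundedLT (Compresses u v) length h
  have shortest : ∀ r, Compresses u v r → x.length ≤ r.length := fun r hr ↦
    (le_total r.length x.length).elim (hxmin hr) id
  have unique : ∀ r, Compresses u v r → r.length ≤ x.length → r = x := fun r hr hle ↦
    hr.eq_of_length_eq hx (hle.antisymm (shortest r hr))
  refine ⟨x, hx, shortest, unique, ?_, fun r hr hsof ↦ ?_⟩
  · intro p hp hpre hsuf
    rw [exists_eq_mul_right_iff_isPrefix] at hpre
    rw [exists_eq_mul_left_iff_isSuffix] at hsuf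
    exact unique p (hx.of_isPrefix_of_isSuffix hp hpre hsuf) hpre.length_le
  · have hle := shortest r hr
    exact (hsof x hx.1 (exists_eq_mul_right_iff_isPrefix.mpr (hx.isPrefix_of_length_le hr hle))
      (exists_eq_mul_left_iff_isSuffix.mpr (hx.isSuffix_of_length_le hr hle))).symm
end

section
/- Let r be a non-empty word, T(r) = {w : rw ∈ A*r}, and P_{Δ_r} the set of proper prefixes of irreducible elements of T(r). Then for any word w over A: w ∈ P_{Δ_r} if and only if no non-empty prefix of w belongs to T(r). -/
/-- `T(r) = {w ∈ A* : r·w ∈ A*·r}`. -/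
def Tset {A : Type*} (r : FreeMonoid A) : Set (FreeMonoid A) :=
  {w | ∃ y, r * w = y * r}

/-- `Δ_r`: the irreducible elements of `T(r)`, i.e. the non-empty elements of `T(r)`
that are not a product of two non-empty elements of `T(r)`. -/
def Irr {A : Type*} (r : FreeMonoid A) : Set (FreeMonoid A) :=
  {w | w ∈ Tset r ∧ w ≠ 1 ∧ ¬ ∃ a b : FreeMonoid A,
        a ∈ Tset r ∧ b ∈ Tset r ∧ a ≠ 1 ∧ b ≠ 1 ∧ w = a * b}

/-!
`T(r)` is left unitary: from `r p = y r` and `r p s = z r` we get `y r s = z r`, and comparing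
the two factorisations of this word gives `r s = u r`, i.e. `s ∈ T(r)`, or `r = u r s`, i.e. `s = 1`.
Hence a non-empty element of `T(r)` that is a proper prefix of an irreducible `d` would split `d`,
which gives one direction. Conversely, if no non-empty prefix of `w` lies in `T(r)`, take a
shortest non-empty `d ∈ T(r)` having `w` as a prefix (`w r` is a candidate since `r ≠ 1`).
In a splitting `d = a b` into non-empty elements of `T(r)`, equidivisibility of the free monoid
makes `a` either a prefix of `w`, excluded by hypothesis, or a shorter element of `T(r)` extending
`w`, excluded by minimality; so `d` is irreducible.
-/

namespace FreeMonoid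

variable {α : Type*}

theorem mul_eq_mul_iff_s8 {a b c d : FreeMonoid α} :
    a * b = c * d ↔ (∃ u, c = a * u ∧ b = u * d) ∨ ∃ u, a = c * u ∧ d = u * b :=
  List.append_eq_append_iff

end FreeMonoid

section

variable {A : Type*} {r : FreeMonoid A}

theorem mul_self_mem_Tset (w : FreeMonoid A) : w * r ∈ Tset r :=
  ⟨r * w, (mul_assoc r w r).symm⟩

theorem mem_Tset_of_mul_mem {p s : FreeMonoid A} (hp : p ∈ Tset r) (hps : p * s ∈ Tset r) :
    s ∈ Tset r := by
  obtain ⟨y, hy⟩ := hp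
  obtain ⟨z, hz⟩ := hps
  rw [← mul_assoc, hy, mul_assoc] at hz
  rcases FreeMonoid.mul_eq_mul_iff_s8.mp hz with ⟨u, -, hu⟩ | ⟨u, -, hu⟩
  · exact ⟨u, hu⟩
  · have hlen := congrArg FreeMonoid.length hu
    simp only [FreeMonoid.length_mul] at hlen
    have hs : s = 1 := FreeMonoid.length_eq_zero.mp (by omega)
    exact ⟨1, by rw [hs, mul_one, one_mul]⟩

theorem not_mem_Tset_of_mem_Irr {d p s : FreeMonoid A} (hd : d ∈ Irr r) (hdps : d = p * s)
    (hp : p ≠ 1) (hs : s ≠ 1) : p ∉ Tset r :=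
  fun hpT => hd.2.2 ⟨p, s, hpT, mem_Tset_of_mul_mem hpT (hdps ▸ hd.1), hp, hs, hdps⟩

theorem mem_Irr_of_minimal {w d t : FreeMonoid A}
    (hw : ∀ p : FreeMonoid A, (∃ t, w = p * t) → p ≠ 1 → p ∉ Tset r)
    (hdT : d ∈ Tset r) (hd : d ≠ 1) (hdt : d = w * t)
    (hmin : ∀ e ∈ Tset r, e ≠ 1 → (∃ t, e = w * t) → d.length ≤ e.length) : d ∈ Irr r := by
  refine ⟨hdT, hd, ?_⟩
  rintro ⟨a, b, haT, -, ha, hb, rfl⟩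
  rcases FreeMonoid.mul_eq_mul_iff_s8.mp hdt with ⟨u, hwa, -⟩ | ⟨u, haw, -⟩
  · exact hw a ⟨u, hwa⟩ ha haT
  · have hlen := hmin a haT ha ⟨u, haw⟩
    rw [FreeMonoid.length_mul] at hlen
    exact hb (FreeMonoid.length_eq_zero.mp (by omega))

end

/-- For a non-empty word `r`, a word `w` is a proper prefix of some
element of `Δ_r` if and only if no non-empty prefix of `w` belongs to `T(r)`. -/
theorem mem_properPrefixes_iff {A : Type*} (r : FreeMonoid A) (hr : r ≠ 1) :
    ∀ w : FreeMonoid A,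
      (∃ d ∈ Irr r, (∃ t, d = w * t) ∧ w ≠ d) ↔
        (∀ p : FreeMonoid A, (∃ t, w = p * t) → p ≠ 1 → p ∉ Tset r) := by
  intro w
  constructor
  · rintro ⟨d, hd, ⟨t, rfl⟩, hwd⟩ p ⟨u, rfl⟩ hp
    have ht : t ≠ 1 := fun ht => hwd (by rw [ht, mul_one])
    exact not_mem_Tset_of_mem_Irr hd (mul_assoc p u t) hp (mul_ne_one'.mpr (Or.inr ht))
  · intro hw
    let S := {e | e ∈ Tset r ∧ e ≠ 1 ∧ ∃ t, e = w * t}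
    have hS : S.Nonempty := ⟨w * r, mul_self_mem_Tset w, mul_ne_one'.mpr (Or.inr hr), r, rfl⟩
    obtain ⟨d, ⟨hdT, hd, t, hdt⟩, hmin⟩ := (measure FreeMonoid.length).wf.has_min S hS
    have hd_irr : d ∈ Irr r :=
      mem_Irr_of_minimal hw hdT hd hdt fun e heT he hwe => not_lt.mp (hmin e ⟨heT, he, hwe⟩)
    refine ⟨d, hd_irr, ⟨t, hdt⟩, ?_⟩
    rintro rfl
    exact hw w ⟨1, (mul_one w).symm⟩ hd hdT
end

section
/- Let r be a non-empty word over A. Suppose r seals s and s seals u. Writing s = r·s' and u = r·u', one has s', u' ∈ T(r) and s' seals u' as words of the free monoid Δ_r* (equivalently, u' ∈ s'·T(r) ∩ T(r)·s' inside A*). -/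
/-- `r` seals `w`: `r` is both a prefix and a suffix of `w`. -/
def Seals {A : Type*} (r w : FreeMonoid A) : Prop :=
  (∃ t, w = r * t) ∧ (∃ t, w = t * r)

/-!
Everything follows from equidivisibility of `A*`: if `r` and `p` are both prefixes (or both
suffixes) of one word and `|r| ≤ |p|`, then `r` is a prefix (suffix) of `p`.
Write `s = r s' = t r` and `u = s a = b s`. Then `r s' = t r` and `r u' = (b t) r`, so
`s', u' ∈ T(r)`, and cancelling `r` in `r u' = u = r s' a` gives `u' = s' a`.
Since `r` and `r a` are both suffixes of `u = t r a`, we get `r a ∈ A* r`, i.e. `a ∈ T(r)`.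
Since `r` and `b r` are both prefixes of `u = b r s'`, we get `b r = r c`, so `c ∈ T(r)`
and `r u' = r c s'`, i.e. `u' = c s'`.
-/

theorem FreeMonoid.exists_eq_mul_of_mul_eq_mul_s9 {A : Type*} {r p x y : FreeMonoid A}
    (h : r * x = p * y) (hle : r.length ≤ p.length) : ∃ c, p = r * c := by
  have hr : r.toList <+: (p * y).toList := h ▸ ⟨x.toList, rfl⟩
  obtain ⟨c, hc⟩ := List.prefix_of_prefix_length_le hr ⟨y.toList, rfl⟩ hle
  exact ⟨FreeMonoid.ofList c, FreeMonoid.toList.injective hc.symm⟩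

theorem FreeMonoid.exists_eq_mul_of_mul_eq_mul' {A : Type*} {r p x y : FreeMonoid A}
    (h : x * r = y * p) (hle : r.length ≤ p.length) : ∃ c, p = c * r := by
  have hr : r.toList <:+ (y * p).toList := h ▸ ⟨x.toList, rfl⟩
  obtain ⟨c, hc⟩ := List.suffix_of_suffix_length_le hr ⟨y.toList, rfl⟩ hle
  exact ⟨FreeMonoid.ofList c, FreeMonoid.toList.injective hc.symm⟩

theorem seals_compress_general {A : Type*} (r s u s' u' : FreeMonoid A)
    (hrs : Seals r s) (hsu : Seals s u)
    (hs : s = r * s') (hu : u = r * u') :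
    s' ∈ Tset r ∧ u' ∈ Tset r ∧
      (∃ a ∈ Tset r, u' = s' * a) ∧ (∃ b ∈ Tset r, u' = b * s') := by
  obtain ⟨-, t, hst⟩ := hrs
  obtain ⟨⟨a, hua⟩, ⟨b, hub⟩⟩ := hsu
  subst hs hu
  refine ⟨⟨t, hst⟩, ⟨b * t, by rw [hub, hst, mul_assoc]⟩, ?_, ?_⟩
  · obtain ⟨c, hc⟩ : ∃ c, r * a = c * r := by
      refine FreeMonoid.exists_eq_mul_of_mul_eq_mul' (x := b * t) (y := t) ?_ (by simp)
      rw [mul_assoc, ← hst, ← hub, hua, hst, mul_assoc]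
    exact ⟨a, ⟨c, hc⟩, mul_left_cancel (hua.trans (mul_assoc _ _ _))⟩
  · obtain ⟨c, hc⟩ : ∃ c, b * r = r * c := by
      refine FreeMonoid.exists_eq_mul_of_mul_eq_mul_s9 (x := u') (y := s') ?_ (by simp)
      rw [hub, mul_assoc]
    refine ⟨c, ⟨b, hc.symm⟩, mul_left_cancel (a := r) ?_⟩
    rw [hub, ← mul_assoc, hc, mul_assoc]

/-- Suppose `r` seals `s` and `s` seals `u`.  Writing `s = r·s'` and
`u = r·u'`, one has `s', u' ∈ T(r)` and `s'` seals `u'` inside the free monoid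
`T(r) = Δ_r*`, i.e. `u' ∈ s'·T(r) ∩ T(r)·s'`. -/
theorem seals_compress {A : Type*} (r s u s' u' : FreeMonoid A) (hr : r ≠ 1)
    (hrs : Seals r s) (hsu : Seals s u)
    (hs : s = r * s') (hu : u = r * u') :
    s' ∈ Tset r ∧ u' ∈ Tset r ∧
      (∃ a ∈ Tset r, u' = s' * a) ∧ (∃ b ∈ Tset r, u' = b * s') :=
  seals_compress_general r s u s' u' hrs hsu hs hu
end

section
/- Let M = ⟨A | u = v⟩ be a one-relator monoid and r a non-empty word sealing both u and v. Every word s ∈ A* factors uniquely as s = y·w where y is the longest prefix of s lying in A*r ∪ {ε} (the right canonical factorization). If s = y·w and s' = y'·w' are right canonical factorizations, then [s]_M = [s']_M if and only if w = w' and [y]_M = [y']_M. -/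
/-!
Since `u` and `v` both end with `r`, in `s = p u q` the last occurrence of `r` ends at the end of
`p u` or later, and whether `r` ends at a given position inside `q` depends only on `q` once the
word before `q` ends with `r`. So the elementary rewrite `p u q ↔ p v q` splits `q = q₁ q₂` in the
same place on both sides: it keeps the suffix `q₂` and turns the prefix `p u q₁` into `p v q₁`,
again an elementary rewrite. Hence the pair (suffix, class of the prefix) is invariant.
-/

/-- The congruence on the free monoid `A*` generated by the single relation `u = v`;
the one-relator monoid `⟨A | u = v⟩` is its quotient. -/
def oneRelCon {A : Type*} (u v : FreeMonoid A) : Con (FreeMonoid A) :=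
  conGen (fun a b => a = u ∧ b = v)

theorem Nat.findGreatest_add {P : ℕ → Prop} [DecidablePred P] {m : ℕ} (hm : P m) (n : ℕ) :
    Nat.findGreatest P (m + n) = m + Nat.findGreatest (fun i => P (m + i)) n := by
  have hP : P (Nat.findGreatest P (m + n)) := Nat.findGreatest_spec (Nat.le_add_right m n) hm
  have hle := Nat.findGreatest_le (P := P) (m + n)
  have hm_le : m ≤ Nat.findGreatest P (m + n) := Nat.le_findGreatest (Nat.le_add_right m n) hm
  apply le_antisymm
  · have := Nat.le_findGreatest (P := fun i => P (m + i)) (n := n)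
      (m := Nat.findGreatest P (m + n) - m) (by omega) (by rwa [Nat.add_sub_cancel' hm_le])
    omega
  · exact Nat.le_findGreatest (Nat.add_le_add_left (Nat.findGreatest_le n) m)
      (Nat.findGreatest_spec (P := fun i => P (m + i)) (Nat.zero_le n) (by simpa using hm))

namespace List

variable {α : Type*} {r x s : List α}

theorem IsSuffix.suffix_append_iff (hx : r <:+ x) (t : List α) :
    r <:+ x ++ t ↔ r <:+ r ++ t := by
  refine ⟨fun h => ?_, fun h => h.trans (suffix_append_self_iff.mpr hx)⟩
  -- if `t` is shorter than `r = c ++ t`, then `c` and `r` are both suffixes of `x`, so `c <:+ r`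
  rcases le_total r.length t.length with hrt | htr
  · exact (suffix_of_suffix_length_le h (suffix_append x t) hrt).trans (suffix_append r t)
  · obtain ⟨c, rfl⟩ := suffix_of_suffix_length_le (suffix_append x t) h htr
    have hcx : c <:+ x := suffix_append_self_iff.mp h
    exact suffix_append_self_iff.mpr
      (suffix_of_suffix_length_le hcx hx (by simp))

section

open scoped Classical

/-- Equal to `0` when `r` does not occur in `s`. -/
noncomputable def endOfLastOccurrence (r s : List α) : ℕ :=
  Nat.findGreatest (fun k => r <:+ s.take k) s.length

theorem endOfLastOccurrence_le (r s : List α) : endOfLastOccurrence r s ≤ s.length :=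
  Nat.findGreatest_le _

theorem endOfLastOccurrence_eq_zero_or (r s : List α) :
    endOfLastOccurrence r s = 0 ∨ r <:+ s.take (endOfLastOccurrence r s) :=
  or_iff_not_imp_left.mpr (Nat.findGreatest_of_ne_zero rfl)

theorem le_endOfLastOccurrence {k : ℕ} (hk : k ≤ s.length) (h : r <:+ s.take k) :
    k ≤ endOfLastOccurrence r s :=
  Nat.le_findGreatest hk h

theorem exists_endOfLastOccurrence_append (r q : List α) :
    ∃ n, ∀ x, r <:+ x → endOfLastOccurrence r (x ++ q) = x.length + n := by
  classical
  refine ⟨Nat.findGreatest (fun i => r <:+ r ++ q.take i) q.length, fun x hx => ?_⟩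
  have hx' : r <:+ (x ++ q).take x.length := by rwa [take_left]
  rw [endOfLastOccurrence, length_append, Nat.findGreatest_add hx']
  simp [take_length_add_append, hx.suffix_append_iff]

end

end List

theorem Con.apply_eq_of_conGen {M X : Type*} [Monoid M] {rel : M → M → Prop} (f : M → X)
    (hf : ∀ p q x y, rel x y → f (p * x * q) = f (p * y * q)) {a b : M}
    (h : conGen rel a b) : f a = f b := by
  -- agreeing under `f` in every two-sided context is a congruence
  let c : Con M :=
    { r := fun a b => ∀ p q, f (p * a * q) = f (p * b * q)
      iseqv := ⟨fun _ _ _ => rfl, fun h p q => (h p q).symm,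
        fun h₁ h₂ p q => (h₁ p q).trans (h₂ p q)⟩
      mul' := fun {a b c d} hab hcd p q => by
        calc f (p * (a * c) * q) = f (p * a * (c * q)) := by simp only [mul_assoc]
          _ = f (p * b * (c * q)) := hab p (c * q)
          _ = f (p * b * c * q) := by simp only [mul_assoc]
          _ = f (p * b * d * q) := hcd (p * b) q
          _ = f (p * (b * d) * q) := by simp only [mul_assoc] }
  have hc : conGen rel ≤ c := Con.conGen_le.mpr fun x y hxy p q => hf p q x y hxy
  simpa using hc h 1 1

namespace FreeMonoid

variable {α : Type*} {r s y z : FreeMonoid α}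

def OneOrEndsWith (r y : FreeMonoid α) : Prop := y = 1 ∨ ∃ a, y = a * r

def IsRightCanonicalPrefix (r s y : FreeMonoid α) : Prop :=
  OneOrEndsWith r y ∧ ∀ z, (∃ t, s = z * t) → OneOrEndsWith r z → z.length ≤ y.length

noncomputable def rightCanonicalPrefix (r s : FreeMonoid α) : FreeMonoid α :=
  ofList (s.toList.take (r.toList.endOfLastOccurrence s.toList))

noncomputable def rightCanonicalSuffix (r s : FreeMonoid α) : FreeMonoid α :=
  ofList (s.toList.drop (r.toList.endOfLastOccurrence s.toList))

theorem endsWith_iff : (∃ a, y = a * r) ↔ r.toList <:+ y.toList :=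
  ⟨fun ⟨a, h⟩ => ⟨a.toList, by rw [h, toList_mul]⟩,
    fun ⟨a, h⟩ => ⟨ofList a, toList.injective (by rw [toList_mul, toList_ofList, h])⟩⟩

theorem exists_eq_mul_iff_prefix : (∃ t, s = y * t) ↔ y.toList <+: s.toList :=
  ⟨fun ⟨t, h⟩ => ⟨t.toList, by rw [h, toList_mul]⟩,
    fun ⟨t, h⟩ => ⟨ofList t, toList.injective (by rw [toList_mul, toList_ofList, h])⟩⟩

theorem rightCanonicalPrefix_mul_rightCanonicalSuffix (r s : FreeMonoid α) :
    rightCanonicalPrefix r s * rightCanonicalSuffix r s = s :=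
  List.take_append_drop _ _

theorem length_rightCanonicalPrefix (r s : FreeMonoid α) :
    (rightCanonicalPrefix r s).length = r.toList.endOfLastOccurrence s.toList :=
  List.length_take_of_le (List.endOfLastOccurrence_le _ _)

theorem le_length_rightCanonicalPrefix (hz : ∃ t, s = z * t) (hr : OneOrEndsWith r z) :
    z.length ≤ (rightCanonicalPrefix r s).length := by
  rw [length_rightCanonicalPrefix]
  rcases hr with rfl | hr
  · exact Nat.zero_le _
  · have hzs := exists_eq_mul_iff_prefix.mp hz
    refine List.le_endOfLastOccurrence hzs.length_le ?_
    change _ <:+ s.toList.take z.toList.length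
    rw [← List.prefix_iff_eq_take.mp hzs]
    exact endsWith_iff.mp hr

theorem isRightCanonicalPrefix_rightCanonicalPrefix (r s : FreeMonoid α) :
    IsRightCanonicalPrefix r s (rightCanonicalPrefix r s) := by
  refine ⟨?_, fun z hz hr => le_length_rightCanonicalPrefix hz hr⟩
  rcases List.endOfLastOccurrence_eq_zero_or r.toList s.toList with h | h
  · left
    simp [rightCanonicalPrefix, h]
  · exact Or.inr (endsWith_iff.mpr h)

theorem IsRightCanonicalPrefix.eq {w : FreeMonoid α} (h : IsRightCanonicalPrefix r s y)
    (hs : s = y * w) : y = rightCanonicalPrefix r s ∧ w = rightCanonicalSuffix r s := by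
  have hlen : y.length = (rightCanonicalPrefix r s).length :=
    le_antisymm (le_length_rightCanonicalPrefix ⟨w, hs⟩ h.1)
      (h.2 _ ⟨_, (rightCanonicalPrefix_mul_rightCanonicalSuffix r s).symm⟩
        (isRightCanonicalPrefix_rightCanonicalPrefix r s).1)
  rw [← rightCanonicalPrefix_mul_rightCanonicalSuffix r s] at hs
  exact List.append_inj hs.symm hlen

theorem exists_rightCanonical_mul (r q : FreeMonoid α) :
    ∃ q₁ q₂, ∀ x, (∃ a, x = a * r) →
      rightCanonicalPrefix r (x * q) = x * q₁ ∧ rightCanonicalSuffix r (x * q) = q₂ := by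
  obtain ⟨n, hn⟩ := List.exists_endOfLastOccurrence_append r.toList q.toList
  refine ⟨ofList (q.toList.take n), ofList (q.toList.drop n), fun x hx => ?_⟩
  have hxq := hn x.toList (endsWith_iff.mp hx)
  exact ⟨by simp [rightCanonicalPrefix, hxq, List.take_length_add_append],
    by simp [rightCanonicalSuffix, hxq, List.drop_length_add_append]⟩

theorem rightCanonical_eq_of_oneRelCon {u v s s' : FreeMonoid α} (hu : ∃ a, u = a * r)
    (hv : ∃ a, v = a * r) (h : oneRelCon u v s s') :
    rightCanonicalSuffix r s = rightCanonicalSuffix r s' ∧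
      oneRelCon u v (rightCanonicalPrefix r s) (rightCanonicalPrefix r s') := by
  let f (s : FreeMonoid α) : FreeMonoid α × (oneRelCon u v).Quotient :=
    (rightCanonicalSuffix r s, rightCanonicalPrefix r s)
  have hf : f s = f s' := by
    refine Con.apply_eq_of_conGen f (fun p q x y hxy => ?_) h
    obtain ⟨rfl, rfl⟩ := hxy
    obtain ⟨q₁, q₂, hq⟩ := exists_rightCanonical_mul r q
    obtain ⟨a, rfl⟩ := hu
    obtain ⟨b, rfl⟩ := hv
    obtain ⟨hpu₁, hpu₂⟩ := hq (p * (a * r)) ⟨p * a, (mul_assoc _ _ _).symm⟩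
    obtain ⟨hpv₁, hpv₂⟩ := hq (p * (b * r)) ⟨p * b, (mul_assoc _ _ _).symm⟩
    simp only [f, hpu₁, hpu₂, hpv₁, hpv₂, Prod.mk.injEq, true_and]
    exact (Con.eq _).mpr ((oneRelCon _ _).mul ((oneRelCon _ _).mul
      ((oneRelCon _ _).refl p) (ConGen.Rel.of _ _ ⟨rfl, rfl⟩)) ((oneRelCon _ _).refl q₁))
  exact ⟨congrArg Prod.fst hf, (Con.eq _).mp (congrArg Prod.snd hf)⟩

end FreeMonoid

open FreeMonoid

theorem right_canonical_factorization_general {A : Type*} (u v r : FreeMonoid A)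
    (hur : ∃ a, u = a * r)
    (hvr : ∃ a, v = a * r) :
    (∀ s : FreeMonoid A, ∃! p : FreeMonoid A × FreeMonoid A,
        s = p.1 * p.2 ∧ (p.1 = 1 ∨ ∃ a, p.1 = a * r) ∧
        ∀ y : FreeMonoid A, (∃ t, s = y * t) → (y = 1 ∨ ∃ a, y = a * r) →
          y.length ≤ p.1.length) ∧
    (∀ y w y' w' : FreeMonoid A,
        ((y = 1 ∨ ∃ a, y = a * r) ∧
          ∀ z : FreeMonoid A, (∃ t, y * w = z * t) → (z = 1 ∨ ∃ a, z = a * r) →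
            z.length ≤ y.length) →
        ((y' = 1 ∨ ∃ a, y' = a * r) ∧
          ∀ z : FreeMonoid A, (∃ t, y' * w' = z * t) → (z = 1 ∨ ∃ a, z = a * r) →
            z.length ≤ y'.length) →
        (oneRelCon u v (y * w) (y' * w') ↔ (w = w' ∧ oneRelCon u v y y'))) := by
  refine ⟨fun s => ⟨(rightCanonicalPrefix r s, rightCanonicalSuffix r s),
    ⟨(rightCanonicalPrefix_mul_rightCanonicalSuffix r s).symm,
      isRightCanonicalPrefix_rightCanonicalPrefix r s⟩, ?_⟩, ?_⟩
  · rintro ⟨y, w⟩ ⟨hs, hy⟩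
    obtain ⟨hy, hw⟩ := IsRightCanonicalPrefix.eq hy hs
    exact Prod.ext hy hw
  · intro y w y' w' hy hy'
    obtain ⟨hy₁, hw⟩ := IsRightCanonicalPrefix.eq hy rfl
    obtain ⟨hy₁', hw'⟩ := IsRightCanonicalPrefix.eq hy' rfl
    refine ⟨fun h => ?_, fun ⟨hww', hyy'⟩ =>
      hww' ▸ (oneRelCon u v).mul hyy' ((oneRelCon u v).refl w)⟩
    obtain ⟨hsuffix, hprefix⟩ := rightCanonical_eq_of_oneRelCon hur hvr h
    rw [← hw, ← hw'] at hsuffix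
    rw [← hy₁, ← hy₁'] at hprefix
    exact ⟨hsuffix, hprefix⟩

/-- Let `M = ⟨A | u = v⟩` with `r` a non-empty word sealing both `u`
and `v`.  Every word `s` factors uniquely as `s = y·w` where `y` is the longest
prefix of `s` lying in `A*r ∪ {ε}` (the right canonical factorization); and if
`s = y·w`, `s' = y'·w'` are right canonical factorizations then `[s]_M = [s']_M`
iff `w = w'` and `[y]_M = [y']_M`. -/
theorem right_canonical_factorization {A : Type*} (u v r : FreeMonoid A) (hr : r ≠ 1)
    (hru : ∃ a, u = r * a) (hur : ∃ a, u = a * r)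
    (hrv : ∃ a, v = r * a) (hvr : ∃ a, v = a * r) :
    (∀ s : FreeMonoid A, ∃! p : FreeMonoid A × FreeMonoid A,
        s = p.1 * p.2 ∧ (p.1 = 1 ∨ ∃ a, p.1 = a * r) ∧
        ∀ y : FreeMonoid A, (∃ t, s = y * t) → (y = 1 ∨ ∃ a, y = a * r) →
          y.length ≤ p.1.length) ∧
    (∀ y w y' w' : FreeMonoid A,
        ((y = 1 ∨ ∃ a, y = a * r) ∧
          ∀ z : FreeMonoid A, (∃ t, y * w = z * t) → (z = 1 ∨ ∃ a, z = a * r) →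
            z.length ≤ y.length) →
        ((y' = 1 ∨ ∃ a, y' = a * r) ∧
          ∀ z : FreeMonoid A, (∃ t, y' * w' = z * t) → (z = 1 ∨ ∃ a, z = a * r) →
            z.length ≤ y'.length) →
        (oneRelCon u v (y * w) (y' * w') ↔ (w = w' ∧ oneRelCon u v y y'))) :=
  right_canonical_factorization_general u v r hur hvr
end

section
/- Let M be a monoid and n ∈ M. On the set M_n = nM ∩ Mn define m ∘ m' = a·n·b whenever m = an and m' = nb. Then ∘ is a well-defined associative operation making M_n a monoid with identity element n. -/
/-!
Every `x ∈ Mn` has some left cofactor `c` with `x = c * n`; put `x ∘ y := c * y`. When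
`y = n * b` this equals `(c * n) * b = x * b`, which no longer mentions the choice of `c`.
All the monoid laws on `nM ∩ Mn` follow from this formula `x ∘ (n * b) = x * b`.
-/

namespace LocalDivisor

variable {M : Type*} [Monoid M] (n : M)

def carrier : Set M := {m : M | (∃ a, m = n * a) ∧ (∃ b, m = b * n)}

open Classical in
/-- Some `c` with `x = c * n`, when there is one (junk value `x` otherwise). -/
noncomputable def leftCofactor (x : M) : M :=
  if h : ∃ c, x = c * n then h.choose else x

noncomputable def mul (x y : M) : M := leftCofactor n x * y

variable {n}

theorem leftCofactor_mul {x : M} (hx : ∃ c, x = c * n) : leftCofactor n x * n = x := by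
  rw [leftCofactor, dif_pos hx]
  exact hx.choose_spec.symm

theorem mul_mul_right {x : M} (hx : ∃ c, x = c * n) (b : M) : mul n x (n * b) = x * b := by
  rw [mul, ← mul_assoc, leftCofactor_mul hx]

theorem mul_mem_carrier {x y : M} (hx : x ∈ carrier n) (hy : y ∈ carrier n) :
    mul n x y ∈ carrier n := by
  obtain ⟨⟨a, rfl⟩, hx'⟩ := hx
  obtain ⟨⟨b, rfl⟩, c, hc⟩ := hy
  refine ⟨⟨a * b, ?_⟩, ⟨leftCofactor n (n * a) * c, ?_⟩⟩
  · rw [mul_mul_right hx', mul_assoc]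
  · rw [mul, hc, mul_assoc]

theorem mul_assoc_of_mem {x y z : M} (hx : x ∈ carrier n) (hy : y ∈ carrier n)
    (hz : z ∈ carrier n) : mul n (mul n x y) z = mul n x (mul n y z) := by
  obtain ⟨⟨b, rfl⟩, hy'⟩ := hy
  obtain ⟨⟨c, rfl⟩, -⟩ := hz
  have hxy := (mul_mem_carrier hx ⟨⟨b, rfl⟩, hy'⟩).2
  rw [mul_mul_right hxy, mul_mul_right hy', mul_assoc n b c, mul_mul_right hx.2,
    mul_mul_right hx.2, mul_assoc]

theorem mul_self_left {x : M} (hx : ∃ a, x = n * a) : mul n n x = x := by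
  obtain ⟨a, rfl⟩ := hx
  exact mul_mul_right ⟨1, (one_mul n).symm⟩ a

theorem mul_self_right {x : M} (hx : ∃ b, x = b * n) : mul n x n = x := by
  simpa using mul_mul_right hx 1

end LocalDivisor

open LocalDivisor in
/-- Let `M` be a monoid and `n ∈ M`.  On the local divisor
`M_n = nM ∩ Mn` there is a well-defined associative operation `∘` with
`(a·n) ∘ (n·b) = a·n·b`, making `M_n` a monoid with identity element `n`. -/
theorem local_divisor_monoid {M : Type*} [Monoid M] (n : M) :
    ∃ op : M → M → M,
      (∀ a b : M, op (a * n) (n * b) = a * n * b) ∧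
      (∀ x ∈ {m : M | (∃ a, m = n * a) ∧ (∃ b, m = b * n)},
       ∀ y ∈ {m : M | (∃ a, m = n * a) ∧ (∃ b, m = b * n)},
        op x y ∈ {m : M | (∃ a, m = n * a) ∧ (∃ b, m = b * n)}) ∧
      (∀ x ∈ {m : M | (∃ a, m = n * a) ∧ (∃ b, m = b * n)},
       ∀ y ∈ {m : M | (∃ a, m = n * a) ∧ (∃ b, m = b * n)},
       ∀ z ∈ {m : M | (∃ a, m = n * a) ∧ (∃ b, m = b * n)},
        op (op x y) z = op x (op y z)) ∧
      (∀ x ∈ {m : M | (∃ a, m = n * a) ∧ (∃ b, m = b * n)},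
        op n x = x ∧ op x n = x) :=
  ⟨mul n, fun a b => mul_mul_right ⟨a, rfl⟩ b,
    fun _ hx _ hy => mul_mem_carrier hx hy,
    fun _ hx _ hy _ hz => mul_assoc_of_mem hx hy hz,
    fun _ hx => ⟨mul_self_left hx.1, mul_self_right hx.2⟩⟩
end

section
/- Let M = ⟨A | u = v⟩ with u ∈ vA* ∩ A*v and u ≠ v (a subspecial, non-special relation). Then the element x = [v]_M is (von Neumann) regular in M: there exists y ∈ M with x y x = x. -/
namespace FreeMonoid

variable {A : Type*}

theorem le_length_pow {b : FreeMonoid A} (hb : b ≠ 1) (n : ℕ) : n ≤ (b ^ n).length := by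
  have hlen : 1 ≤ b.length := Nat.one_le_iff_ne_zero.mpr (mt length_eq_zero.mp hb)
  induction n with
  | zero => exact Nat.zero_le _
  | succ n ih => rw [pow_succ, length_mul]; omega

theorem exists_eq_mul_of_mul_eq_mul_s14 {x y z w : FreeMonoid A} (h : x * y = z * w)
    (hlen : z.length ≤ x.length) : ∃ t, x = z * t := by
  have hx : x.toList <+: (x * y).toList := List.prefix_append _ _
  have hz : z.toList <+: (x * y).toList := h ▸ List.prefix_append _ _
  obtain ⟨t, ht⟩ := List.prefix_of_prefix_length_le hz hx hlen
  exact ⟨ofList t, toList.injective (by simpa [toList_mul] using ht.symm)⟩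

theorem exists_mul_mul_eq_mul_pow {a b v : FreeMonoid A} (hb : b ≠ 1) (h : b * v = v * a) :
    ∃ t n, v * t * v = v * a ^ n := by
  have hpow : b ^ v.length * v = v * a ^ v.length := ((SemiconjBy.pow_right h.symm _).eq).symm
  obtain ⟨t, ht⟩ := exists_eq_mul_of_mul_eq_mul_s14 hpow (le_length_pow hb _)
  exact ⟨t, v.length, by rw [← ht, hpow]⟩

end FreeMonoid

theorem mul_pow_eq_self_of_mul_eq_self {M : Type*} [Monoid M] {x a : M} (h : x * a = x)
    (n : ℕ) : x * a ^ n = x := by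
  simpa using (SemiconjBy.pow_right (show SemiconjBy x a 1 from h.trans (one_mul x).symm) n).eq

theorem subspecial_regular_general {A : Type*} (u v : FreeMonoid A)
    (huv : u ≠ v)
    (h1 : ∃ a, u = v * a) (h2 : ∃ a, u = a * v) :
    ∃ y : (oneRelCon u v).Quotient,
      (oneRelCon u v).mk' v * y * (oneRelCon u v).mk' v = (oneRelCon u v).mk' v := by
  obtain ⟨a, rfl⟩ := h1
  obtain ⟨b, hbv⟩ := h2
  have hb_ne_one : b ≠ 1 := by
    rintro rfl
    exact huv (hbv.trans (one_mul v))
  obtain ⟨t, n, hvtv⟩ := FreeMonoid.exists_mul_mul_eq_mul_pow hb_ne_one hbv.symm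
  set C := oneRelCon (v * a) v
  have hva : C.mk' v * C.mk' a = C.mk' v := by
    rw [← map_mul]
    exact (Con.eq C).mpr (ConGen.Rel.of _ _ ⟨rfl, rfl⟩)
  refine ⟨C.mk' t, ?_⟩
  rw [← map_mul, ← map_mul, hvtv, map_mul, map_pow, mul_pow_eq_self_of_mul_eq_self hva]

/-- Let `M = ⟨A | u = v⟩` with `u ∈ vA* ∩ A*v` and `u ≠ v`
(a subspecial, non-special relation, `v` non-empty).  Then `x = [v]_M` is
von Neumann regular in `M`: there exists `y ∈ M` with `x·y·x = x`. -/
theorem subspecial_regular {A : Type*} (u v : FreeMonoid A)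
    (hv : v ≠ 1) (huv : u ≠ v)
    (h1 : ∃ a, u = v * a) (h2 : ∃ a, u = a * v) :
    ∃ y : (oneRelCon u v).Quotient,
      (oneRelCon u v).mk' v * y * (oneRelCon u v).mk' v = (oneRelCon u v).mk' v :=
  subspecial_regular_general u v huv h1 h2
end

section
/- Let M = ⟨A | u = v⟩ be a non-subspecial one-relator monoid with 1 ≤ |v| ≤ |u| (so either v is not a prefix of u or v is not a suffix of u, and u ≠ v). Then the integral monoid ring ℤM has only trivial idempotents: the only idempotents of ℤM are 0 and 1. -/
/-!
Let `m` be maximal, for the preorder of principal right ideals, in the support of a nonzero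
idempotent `e` of `ℤ[M]`. If `M` has no nontrivial units and `m * w = m` only for `w = 1`, then
`m * 1` is the only factorisation of `m` inside the support, so `e m = e m * e 1` and `e 1 = 1`.
The same holds for the idempotent `1 - e` unless it vanishes, and `e 1 + (1 - e) 1 = 1` rules out
both being nonzero.

For `M = ⟨A | u = v⟩` with `u`, `v` nonempty, no rewriting reaches the empty word, so `M` has no
nontrivial units; the hypothesis on `m * w = m` comes from Adian's cancellation theorem: a
common first letter of `u` and `v` can be stripped, and once the first letters differ the presented
monoid is left cancellative, so `p * w = p` forces `w = 1` unless `v` is a prefix of `u`. If `v` is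
not a suffix of `u`, the mirror argument gives `w * p = p → w = 1`, which is handled in `ℤ[Mᵐᵒᵖ]`.
-/

theorem eq_one_of_mul_eq_one_of_mul_eq_left {M : Type*} [Monoid M] [Subsingleton Mˣ]
    (hstab : ∀ m w : M, m * w = m → w = 1) {x y : M} (h : x * y = 1) : y = 1 :=
  have hyx : y * x = 1 := hstab (y * x) (y * x) (by rw [mul_assoc, ← mul_assoc x, h, one_mul])
  isUnit_iff_eq_one.mp ⟨⟨y, x, hyx, h⟩, rfl⟩

namespace MonoidAlgebra

variable {R M : Type*} [Monoid M] [Subsingleton Mˣ]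

theorem coeff_one_eq_one_of_isIdempotentElem [Semiring R] [IsLeftCancelMulZero R]
    (hstab : ∀ m w : M, m * w = m → w = 1) {f : R[M]} (hf : IsIdempotentElem f) (hf0 : f ≠ 0) :
    f.coeff 1 = 1 := by
  obtain ⟨m, hm, hmax⟩ := f.coeff.support.exists_maximalFor (fun x => Set.range (x * ·))
    (Finsupp.support_nonempty_iff.mpr (by simpa using hf0))
  have huniq : UniqueMul f.coeff.support f.coeff.support m 1 := by
    intro x y hx _ hxy
    rw [mul_one] at hxy
    obtain ⟨t, rfl⟩ : x ∈ Set.range (m * ·) :=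
      hmax hx (by rintro _ ⟨s, rfl⟩; exact ⟨y * s, by simp only [← hxy, mul_assoc]⟩) ⟨1, mul_one x⟩
    dsimp only at hxy
    have hy : y = 1 :=
      eq_one_of_mul_eq_one_of_mul_eq_left hstab (hstab m (t * y) (by rwa [← mul_assoc]))
    subst hy
    exact ⟨by simpa using hxy, rfl⟩
  have hcoeff : f.coeff m * 1 = f.coeff m * f.coeff 1 := by
    rw [mul_one, ← coeff_mul_mul_of_uniqueMul huniq, hf.eq, mul_one]
  exact (mul_left_cancel₀ (Finsupp.mem_support_iff.mp hm) hcoeff).symm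

theorem eq_zero_or_eq_one_of_isIdempotentElem_of_mul_eq_left [Ring R] [IsDomain R]
    (hstab : ∀ m w : M, m * w = m → w = 1) {e : R[M]} (he : IsIdempotentElem e) :
    e = 0 ∨ e = 1 := by
  by_contra! h
  have h₁ := coeff_one_eq_one_of_isIdempotentElem hstab he h.1
  have h₂ := coeff_one_eq_one_of_isIdempotentElem hstab he.one_sub (sub_ne_zero.mpr h.2.symm)
  rw [coeff_sub, Finsupp.sub_apply, coeff_one_one, h₁, sub_self] at h₂
  exact zero_ne_one h₂

open MulOpposite in
theorem eq_zero_or_eq_one_of_isIdempotentElem_of_mul_eq_right [Ring R] [IsDomain R]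
    (hstab : ∀ m w : M, w * m = m → w = 1) {e : R[M]} (he : IsIdempotentElem e) :
    e = 0 ∨ e = 1 := by
  have : Subsingleton Mᵐᵒᵖˣ := Units.opEquiv.toEquiv.subsingleton
  have he' : IsIdempotentElem (op e) := by rw [IsIdempotentElem, ← op_mul, he.eq]
  have hinj := (MonoidAlgebra.opRingEquiv (R := R) (M := M)).injective
  refine (eq_zero_or_eq_one_of_isIdempotentElem_of_mul_eq_left
    (fun m w h => unop_injective (hstab m.unop w.unop (congrArg unop h)))
    (he'.map MonoidAlgebra.opRingEquiv)).imp (fun h => ?_) (fun h => ?_)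
  · exact (op_eq_zero_iff e).mp ((map_eq_zero_iff _ hinj).mp h)
  · exact (op_eq_one_iff e).mp ((map_eq_one_iff _ hinj).mp h)

end MonoidAlgebra

namespace OneRel

variable {A : Type*}

def Rewrite (u v x y : List A) : Prop := ∃ l r, x = l ++ u ++ r ∧ y = l ++ v ++ r

def Step (u v x y : List A) : Prop := Rewrite u v x y ∨ Rewrite v u x y

inductive Chain (u v : List A) : ℕ → List A → List A → Prop
  | refl (x : List A) : Chain u v 0 x x
  | cons {n : ℕ} {x y z : List A} : Step u v x y → Chain u v n y z → Chain u v (n + 1) x z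

variable {u v x y : List A}

namespace Rewrite

theorem append_left (g : List A) : Rewrite u v x y → Rewrite u v (g ++ x) (g ++ y)
  | ⟨l, r, hx, hy⟩ => ⟨g ++ l, r, by simp [hx], by simp [hy]⟩

theorem append_right (g : List A) : Rewrite u v x y → Rewrite u v (x ++ g) (y ++ g)
  | ⟨l, r, hx, hy⟩ => ⟨l, r ++ g, by simp [hx], by simp [hy]⟩

theorem reverse : Rewrite u v x y → Rewrite u.reverse v.reverse x.reverse y.reverse
  | ⟨l, r, hx, hy⟩ => ⟨r.reverse, l.reverse, by simp [hx], by simp [hy]⟩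

theorem of_cons {c : A} : Rewrite (c :: u) (c :: v) x y → Rewrite u v x y
  | ⟨l, r, hx, hy⟩ => ⟨l ++ [c], r, by simp [hx], by simp [hy]⟩

theorem right_ne_nil (hv : v ≠ []) : Rewrite u v x y → y ≠ []
  | ⟨l, r, _, hy⟩ => by simp [hy, hv]

theorem cons_cases {a b c : A} {z : List A} (h : Rewrite (a :: u) (b :: v) (c :: z) y) :
    (∃ z', y = c :: z' ∧ Rewrite (a :: u) (b :: v) z z') ∨
      (c = a ∧ ∃ r, z = u ++ r ∧ y = b :: (v ++ r)) := by
  obtain ⟨_ | ⟨d, l⟩, r, hx, rfl⟩ := h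
  · simp only [List.nil_append, List.cons_append, List.cons.injEq] at hx
    exact .inr ⟨hx.1, r, hx.2, rfl⟩
  · simp only [List.cons_append, List.cons.injEq] at hx
    obtain ⟨rfl, rfl⟩ := hx
    exact .inl ⟨_, rfl, l, r, rfl, rfl⟩

end Rewrite

namespace Step

theorem symm : Step u v x y → Step u v y x
  | .inl ⟨l, r, hx, hy⟩ => .inr ⟨l, r, hy, hx⟩
  | .inr ⟨l, r, hx, hy⟩ => .inl ⟨l, r, hy, hx⟩

theorem append_left (g : List A) : Step u v x y → Step u v (g ++ x) (g ++ y) :=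
  Or.imp (Rewrite.append_left g) (Rewrite.append_left g)

theorem append_right (g : List A) : Step u v x y → Step u v (x ++ g) (y ++ g) :=
  Or.imp (Rewrite.append_right g) (Rewrite.append_right g)

theorem reverse : Step u v x y → Step u.reverse v.reverse x.reverse y.reverse :=
  Or.imp Rewrite.reverse Rewrite.reverse

theorem of_cons {c : A} : Step (c :: u) (c :: v) x y → Step u v x y :=
  Or.imp Rewrite.of_cons Rewrite.of_cons

theorem right_ne_nil (hu : u ≠ []) (hv : v ≠ []) : Step u v x y → y ≠ []
  | .inl h => h.right_ne_nil hv
  | .inr h => h.right_ne_nil hu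

theorem cons_cases {a b c : A} {z : List A} (h : Step (a :: u) (b :: v) (c :: z) y) :
    (∃ z', y = c :: z' ∧ Step (a :: u) (b :: v) z z') ∨
      (c = a ∧ ∃ r, z = u ++ r ∧ y = b :: (v ++ r)) ∨
      (c = b ∧ ∃ r, z = v ++ r ∧ y = a :: (u ++ r)) := by
  rcases h with h | h
  · rcases h.cons_cases with ⟨z', rfl, h'⟩ | h'
    exacts [.inl ⟨z', rfl, .inl h'⟩, .inr (.inl h')]
  · rcases h.cons_cases with ⟨z', rfl, h'⟩ | h'
    exacts [.inl ⟨z', rfl, .inr h'⟩, .inr (.inr h')]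

end Step

namespace Chain

variable {m n : ℕ} {z : List A}

theorem single (h : Step u v x y) : Chain u v 1 x y := .cons h (.refl y)

theorem trans (h₁ : Chain u v m x y) (h₂ : Chain u v n y z) : Chain u v (m + n) x z := by
  induction h₁ with
  | refl => simpa using h₂
  | cons s _ ih => rw [Nat.add_right_comm]; exact .cons s (ih h₂)

theorem symm (h : Chain u v n x y) : Chain u v n y x := by
  induction h with
  | refl => exact .refl _
  | cons s _ ih => exact ih.trans (.single s.symm)

theorem map {u' v' : List A} {f : List A → List A}
    (hf : ∀ {x y}, Step u v x y → Step u' v' (f x) (f y)) (h : Chain u v n x y) :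
    Chain u' v' n (f x) (f y) := by
  induction h with
  | refl => exact .refl _
  | cons s _ ih => exact .cons (hf s) ih

theorem eq_nil (hu : u ≠ []) (hv : v ≠ []) (h : Chain u v n x []) : x = [] := by
  generalize hy : ([] : List A) = y at h
  induction h with
  | refl => rfl
  | cons s _ ih => exact absurd ((ih hy).trans hy.symm) (s.right_ne_nil hu hv)

end Chain

section Adian

variable {a b : A} {n : ℕ}

def HeadCancel (u v : List A) (n : ℕ) : Prop :=
  ∀ k ≤ n, ∀ c x y, Chain u v k (c :: x) (c :: y) → ∃ m ≤ k, Chain u v m x y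

/-- A chain from `a :: x` to `b :: y` must at some point rewrite the head `a :: u` to `b :: v`. -/
def HeadSwap (a b : A) (u v : List A) (n : ℕ) : Prop :=
  ∀ x y, Chain (a :: u) (b :: v) n (a :: x) (b :: y) →
    ∃ t k l, k + l < n ∧ Chain (a :: u) (b :: v) k x (u ++ t) ∧ Chain (a :: u) (b :: v) l (v ++ t) y

theorem HeadCancel.append (hc : HeadCancel u v n) :
    ∀ (g : List A) {k x y}, k ≤ n → Chain u v k (g ++ x) (g ++ y) → ∃ m ≤ k, Chain u v m x y
  | [], k, _, _, _, h => ⟨k, le_rfl, h⟩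
  | c :: g, _, _, _, hk, h =>
    let ⟨_, hm, h'⟩ := hc _ hk c _ _ h
    let ⟨m', hm', h''⟩ := hc.append g (hm.trans hk) h'
    ⟨m', hm'.trans hm, h''⟩

theorem headCancel_succ (hc : HeadCancel (a :: u) (b :: v) n) (hs : HeadSwap a b u v n) :
    HeadCancel (a :: u) (b :: v) (n + 1) := by
  intro k hk c x y h
  obtain hk | rfl := Nat.lt_succ_iff_lt_or_eq.mp (Nat.lt_succ_of_le hk)
  · exact hc k (by omega) c x y h
  obtain _ | ⟨s, h⟩ := h
  rcases s.cons_cases with ⟨z, rfl, s'⟩ | ⟨rfl, r, rfl, rfl⟩ | ⟨rfl, r, rfl, rfl⟩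
  · obtain ⟨m, hm, h'⟩ := hc n le_rfl c z y h
    exact ⟨m + 1, by omega, .cons s' h'⟩
  · obtain ⟨t, k, l, hkl, h₁, h₂⟩ := hs y (v ++ r) h.symm
    obtain ⟨m, hm, h₃⟩ := hc.append v (by omega) h₂
    exact ⟨m + k, by omega, (h₃.symm.map (Step.append_left u)).trans h₁.symm⟩
  · obtain ⟨t, k, l, hkl, h₁, h₂⟩ := hs (u ++ r) y h
    obtain ⟨m, hm, h₃⟩ := hc.append u (by omega) h₁
    exact ⟨m + l, by omega, (h₃.map (Step.append_left v)).trans h₂⟩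

theorem headSwap_succ (hab : a ≠ b) (hc : HeadCancel (a :: u) (b :: v) n)
    (hs : HeadSwap a b u v n) : HeadSwap a b u v (n + 1) := by
  intro x y h
  obtain _ | ⟨s, h⟩ := h
  rcases s.cons_cases with ⟨z, rfl, s'⟩ | ⟨-, r, rfl, rfl⟩ | ⟨hab', -⟩
  · obtain ⟨t, k, l, hkl, h₁, h₂⟩ := hs z y h
    exact ⟨t, k + 1, l, by omega, .cons s' h₁, h₂⟩
  · obtain ⟨m, hm, h⟩ := hc n le_rfl b (v ++ r) y h
    exact ⟨r, 0, m, by omega, .refl _, h⟩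
  · exact absurd hab' hab

theorem headCancel_and_headSwap (hab : a ≠ b) :
    ∀ n, HeadCancel (a :: u) (b :: v) n ∧ HeadSwap a b u v n
  | 0 => by
    refine ⟨fun k hk c x y h => ?_, fun x y h => ?_⟩
    · obtain rfl : k = 0 := Nat.le_zero.mp hk
      cases h
      exact ⟨0, le_rfl, .refl _⟩
    · cases h
      exact absurd rfl hab
  | n + 1 =>
    let ⟨hc, hs⟩ := headCancel_and_headSwap hab n
    ⟨headCancel_succ hc hs, headSwap_succ hab hc hs⟩

theorem Chain.cancel_left (hab : a ≠ b) (g : List A)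
    (h : Chain (a :: u) (b :: v) n (g ++ x) (g ++ y)) : ∃ m, Chain (a :: u) (b :: v) m x y :=
  let ⟨m, _, h⟩ := (headCancel_and_headSwap hab n).1.append g le_rfl h
  ⟨m, h⟩

end Adian

theorem Chain.eq_nil_of_append_right {n : ℕ} {p w : List A} (hvu : ¬ v <+: u) (huv : ¬ u <+: v)
    (h : Chain u v n (p ++ w) p) : w = [] := by
  induction u generalizing v with
  | nil => exact absurd List.nil_prefix huv
  | cons a u ih =>
    obtain _ | ⟨b, v⟩ := v
    · exact absurd List.nil_prefix hvu
    by_cases hab : a = b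
    · subst hab
      exact ih (by simpa using hvu) (by simpa using huv) (h.map Step.of_cons)
    · obtain ⟨m, hm⟩ := Chain.cancel_left hab p (y := []) (by simpa using h)
      exact hm.eq_nil (List.cons_ne_nil _ _) (List.cons_ne_nil _ _)

theorem Chain.eq_nil_of_append_left {n : ℕ} {p w : List A} (hvu : ¬ v <:+ u) (huv : ¬ u <:+ v)
    (h : Chain u v n (w ++ p) p) : w = [] := by
  have h' := h.map Step.reverse
  rw [List.reverse_append] at h'
  simpa using h'.eq_nil_of_append_right (by simpa using hvu) (by simpa using huv)

section Presentation

variable {u v : FreeMonoid A}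

def chainCon (u v : FreeMonoid A) : Con (FreeMonoid A) where
  r x y := ∃ n, Chain u.toList v.toList n x.toList y.toList
  iseqv := ⟨fun _ => ⟨0, .refl _⟩, fun ⟨n, h⟩ => ⟨n, h.symm⟩,
    fun ⟨m, h⟩ ⟨n, h'⟩ => ⟨m + n, h.trans h'⟩⟩
  mul' := fun ⟨m, h⟩ ⟨n, h'⟩ =>
    ⟨m + n, (h.map (Step.append_right _)).trans (h'.map (Step.append_left _))⟩

theorem oneRelCon_le_chainCon : oneRelCon u v ≤ chainCon u v :=
  Con.conGen_le.mpr fun _ _ ⟨hx, hy⟩ => hx ▸ hy ▸ ⟨1, .single (.inl ⟨[], [], by simp, by simp⟩)⟩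

theorem toList_ne_nil {w : FreeMonoid A} (hw : w ≠ 1) : w.toList ≠ [] :=
  fun h => hw (FreeMonoid.toList.injective h)

theorem eq_one_of_mul_eq_one (hu : u ≠ 1) (hv : v ≠ 1) {x y : (oneRelCon u v).Quotient}
    (h : x * y = 1) : x = 1 := by
  induction x, y using Con.induction_on₂ with | _ p q
  rw [← Con.coe_mul, ← Con.coe_one, Con.eq] at h
  obtain ⟨n, hn⟩ := oneRelCon_le_chainCon h
  obtain rfl : p = 1 :=
    FreeMonoid.toList.injective (List.append_eq_nil_iff.mp
      (hn.eq_nil (toList_ne_nil hu) (toList_ne_nil hv))).1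
  rfl

theorem subsingleton_units (hu : u ≠ 1) (hv : v ≠ 1) : Subsingleton (oneRelCon u v).Quotientˣ :=
  Subsingleton.units_of_isUnit fun _ ⟨w, hw⟩ => hw ▸ eq_one_of_mul_eq_one hu hv w.mul_inv

theorem eq_one_of_mul_eq_left (hlen : v.length ≤ u.length) (hvu : ¬ ∃ t, u = v * t)
    {m w : (oneRelCon u v).Quotient} (h : m * w = m) : w = 1 := by
  induction m, w using Con.induction_on₂ with | _ p q
  rw [← Con.coe_mul, Con.eq] at h
  obtain ⟨n, hn⟩ := oneRelCon_le_chainCon h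
  have hvu' : ¬ v.toList <+: u.toList := fun ⟨t, ht⟩ =>
    hvu ⟨FreeMonoid.ofList t, FreeMonoid.toList.injective ht.symm⟩
  have huv' : ¬ u.toList <+: v.toList := fun h => hvu' (h.eq_of_length_le hlen ▸ h)
  obtain rfl : q = 1 := FreeMonoid.toList.injective (hn.eq_nil_of_append_right hvu' huv')
  rfl

theorem eq_one_of_mul_eq_right (hlen : v.length ≤ u.length) (hvu : ¬ ∃ t, u = t * v)
    {m w : (oneRelCon u v).Quotient} (h : w * m = m) : w = 1 := by
  induction m, w using Con.induction_on₂ with | _ p q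
  rw [← Con.coe_mul, Con.eq] at h
  obtain ⟨n, hn⟩ := oneRelCon_le_chainCon h
  have hvu' : ¬ v.toList <:+ u.toList := fun ⟨t, ht⟩ =>
    hvu ⟨FreeMonoid.ofList t, FreeMonoid.toList.injective ht.symm⟩
  have huv' : ¬ u.toList <:+ v.toList := fun h => hvu' (h.eq_of_length_le hlen ▸ h)
  obtain rfl : q = 1 := FreeMonoid.toList.injective (hn.eq_nil_of_append_left hvu' huv')
  rfl

end Presentation

end OneRel

open MonoidAlgebra OneRel in
theorem nonsubspecial_trivial_idempotents_general {A : Type*} (u v : FreeMonoid A)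
    (hlen : v.length ≤ u.length)
    (hns : ¬ ((∃ a, u = v * a) ∧ (∃ b, u = b * v))) :
    ∀ e : MonoidAlgebra ℤ (oneRelCon u v).Quotient, e * e = e → e = 0 ∨ e = 1 := by
  intro e he
  have hv : v ≠ 1 := by
    rintro rfl
    exact hns ⟨⟨u, (one_mul u).symm⟩, ⟨u, (mul_one u).symm⟩⟩
  have hu : u ≠ 1 := by
    rintro rfl
    exact hv (FreeMonoid.length_eq_zero.mp (Nat.le_zero.mp hlen))
  have := subsingleton_units hu hv
  rcases not_and_or.mp hns with hpre | hsuf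
  · exact eq_zero_or_eq_one_of_isIdempotentElem_of_mul_eq_left
      (fun _ _ => eq_one_of_mul_eq_left hlen hpre) he
  · exact eq_zero_or_eq_one_of_isIdempotentElem_of_mul_eq_right
      (fun _ _ => eq_one_of_mul_eq_right hlen hsuf) he

/-- Let `M = ⟨A | u = v⟩` be a non-subspecial one-relator monoid with
`1 ≤ |v| ≤ |u|` (so it is not the case that `v` is both a prefix and a suffix of `u`).
Then the integral monoid ring `ℤM` has only trivial idempotents: `0` and `1`. -/
theorem nonsubspecial_trivial_idempotents {A : Type*} (u v : FreeMonoid A)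
    (hv : v ≠ 1) (hlen : v.length ≤ u.length)
    (hns : ¬ ((∃ a, u = v * a) ∧ (∃ b, u = b * v))) :
    ∀ e : MonoidAlgebra ℤ (oneRelCon u v).Quotient, e * e = e → e = 0 ∨ e = 1 :=
  nonsubspecial_trivial_idempotents_general u v hlen hns
end
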